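/- arXiv:2402.14666 — 2 statements merged into one kernel-verified Lean document; each statement's English description precedes it below -/
import Mathlib

section
/- For integers d ≤ m < 2d with d ≥ 2, if n' non-miners each have m - d + 1 incoming edges from miners and this accounts for all miner out-edges not used in the miner clique, i.e., n'(m-d+1) = m(d-1) - m(m-1)/2, then n = m + n' = (m/2)·(m+1)/(m-d+1), and this quantity is strictly less than 2d². -/
/-!
Put `c = m - d + 1`. Adding `m * c` to both sides of the edge count gives
`(m + n') * c = m² - m(m-1)/2 = m(m+1)/2`, which is the closed form. Since `d ≤ m` the excess
`c` is at least `1`, so `m + n' ≤ m(m+1)/2 ≤ (2d-1)d < 2d²` as `m + 1 ≤ 2d`.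
-/

section

variable {K : Type*} [Field K]

theorem add_mul_sub_add_one_eq [NeZero (2 : K)] {m d n : K}
    (h : n * (m - d + 1) = m * (d - 1) - m * (m - 1) / 2) :
    (m + n) * (m - d + 1) = m * (m + 1) / 2 := by
  rw [add_mul, h]
  field_simp
  ring

variable [LinearOrder K] [IsStrictOrderedRing K]

theorem add_lt_two_mul_sq {m d n : K} (hm : 0 ≤ m) (hdm : d ≤ m) (hmd : m + 1 ≤ 2 * d)
    (h : (m + n) * (m - d + 1) = m * (m + 1) / 2) :
    m + n < 2 * d ^ 2 := by
  have hc : 1 ≤ m - d + 1 := by linarith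
  have hmn : 0 ≤ m + n := by
    refine nonneg_of_mul_nonneg_left ?_ (by linarith : (0 : K) < m - d + 1)
    rw [h]
    positivity
  calc m + n ≤ (m + n) * (m - d + 1) := le_mul_of_one_le_right hmn hc
    _ = m * (m + 1) / 2 := h
    _ ≤ (2 * d - 1) * (2 * d) / 2 := by gcongr <;> linarith
    _ < 2 * d ^ 2 := by nlinarith

end

theorem stmt9_general (m d n' : ℕ) (h1 : d ≤ m) (h2 : m < 2 * d)
    (hn' : (n' : ℚ) * ((m : ℚ) - d + 1) = (m : ℚ) * ((d : ℚ) - 1) - (m : ℚ) * ((m : ℚ) - 1) / 2) :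
    (m : ℚ) + n' = ((m : ℚ) / 2) * (((m : ℚ) + 1) / ((m : ℚ) - d + 1)) ∧
    (m : ℚ) + n' < 2 * (d : ℚ) ^ 2 := by
  have hdm : (d : ℚ) ≤ m := by exact_mod_cast h1
  have hmd : (m : ℚ) + 1 ≤ 2 * d := by exact_mod_cast h2
  have htotal := add_mul_sub_add_one_eq hn'
  refine ⟨?_, add_lt_two_mul_sq m.cast_nonneg hdm hmd htotal⟩
  rw [← mul_div_assoc, div_mul_eq_mul_div, eq_div_iff (by linarith), htotal, mul_comm]

/-- From the proof of Lemma 4.9: for `d ≤ m < 2d` with `d ≥ 2`, if `n'` non-miners each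
receive `m - d + 1` edges from the miners and this accounts for all miner out-edges not
used in the miner clique, i.e. `n'(m-d+1) = m(d-1) - m(m-1)/2`, then
`n = m + n' = (m/2)·(m+1)/(m-d+1)`, and this quantity is strictly less than `2d²`. -/
theorem stmt9 (m d n' : ℕ) (hd : 2 ≤ d) (h1 : d ≤ m) (h2 : m < 2 * d)
    (hn' : (n' : ℚ) * ((m : ℚ) - d + 1) = (m : ℚ) * ((d : ℚ) - 1) - (m : ℚ) * ((m : ℚ) - 1) / 2) :
    (m : ℚ) + n' = ((m : ℚ) / 2) * (((m : ℚ) + 1) / ((m : ℚ) - d + 1)) ∧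
    (m : ℚ) + n' < 2 * (d : ℚ) ^ 2 :=
  stmt9_general m d n' h1 h2 hn'
end

section
/- In the star-of-triangles graph G of Lemma 4.2 (three symmetric trees hanging off a directed triangle of miners v1, v2, v3), the score of a node strictly increases with its depth: if n1 is at depth δ1 and n2 at depth δ2 with δ1 > δ2 in the same tree Tv_i, and the number of miners outside Tv_i is at least twice the number inside, then score(n1) > score(n2). -/
open Finset

/-- From Lemma 4.2 (star-of-triangles graph): scores strictly increase with depth. Let the
miner set `M` be partitioned into the miners `Mi` inside the tree `Tv_i` and the miners
`Mo` outside it, with at least twice as many miners outside as inside. Let `n1` be a node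
at greater depth than `n2` in the same tree, so that `n2` lies on the (unique shortest)
path from `n1` to every outside miner, i.e. `dist(n1,j) = dist(n1,n2) + dist(n2,j)` for
every `j ∈ Mo`. Then `score(n1) > score(n2)`. -/
theorem stmt18 {V : Type*} [Fintype V] [DecidableEq V] (G : SimpleGraph V)
    (hG : G.Connected) (M Mi Mo : Finset V) (hM : M = Mi ∪ Mo)
    (hdisj : Disjoint Mi Mo) (hMo : Mo.Nonempty)
    (hsize : 2 * Mi.card ≤ Mo.card)
    (n1 n2 : V) (hne : n1 ≠ n2)
    (hpath : ∀ j ∈ Mo, G.dist n1 j = G.dist n1 n2 + G.dist n2 j) :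
    (∑ j ∈ M, (G.dist n2 j : ℚ)) / M.card < (∑ j ∈ M, (G.dist n1 j : ℚ)) / M.card := by
  have hd : 1 ≤ G.dist n1 n2 := hG.pos_dist_of_ne hne
  set d : ℚ := (G.dist n1 n2 : ℚ) with hdq
  have hd1 : (1 : ℚ) ≤ d := by rw [hdq]; exact_mod_cast hd
  have hMcard : (0 : ℚ) < M.card := by
    have : M.Nonempty := by
      rw [hM]; exact hMo.mono subset_union_right
    exact_mod_cast Finset.card_pos.mpr this
  rw [div_lt_div_iff_of_pos_right hMcard, hM,
    Finset.sum_union hdisj, Finset.sum_union hdisj]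
  -- outside sum equality
  have hout : ∑ j ∈ Mo, (G.dist n1 j : ℚ) = Mo.card * d + ∑ j ∈ Mo, (G.dist n2 j : ℚ) := by
    have h1 : ∀ j ∈ Mo, (G.dist n1 j : ℚ) = d + G.dist n2 j := fun j hj => by
      rw [hdq]; exact_mod_cast hpath j hj
    rw [Finset.sum_congr rfl h1, Finset.sum_add_distrib, Finset.sum_const, nsmul_eq_mul]
  -- inside sum inequality (triangle)
  have hin : ∑ j ∈ Mi, (G.dist n2 j : ℚ) ≤ Mi.card * d + ∑ j ∈ Mi, (G.dist n1 j : ℚ) := by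
    have h2 : ∀ j ∈ Mi, (G.dist n2 j : ℚ) ≤ d + G.dist n1 j := fun j _ => by
      rw [hdq]
      have := hG.dist_triangle (u := n2) (v := n1) (w := j)
      rw [SimpleGraph.dist_comm (G := G) (u := n2) (v := n1)] at this
      exact_mod_cast this
    calc ∑ j ∈ Mi, (G.dist n2 j : ℚ) ≤ ∑ j ∈ Mi, ((d : ℚ) + G.dist n1 j) :=
          Finset.sum_le_sum h2
    _ = Mi.card * d + ∑ j ∈ Mi, (G.dist n1 j : ℚ) := by
        rw [Finset.sum_add_distrib, Finset.sum_const, nsmul_eq_mul]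
  have hcard : (Mi.card : ℚ) + 1 ≤ Mo.card := by
    have hMo1 : 1 ≤ Mo.card := Finset.card_pos.mpr hMo
    have : Mi.card + 1 ≤ Mo.card := by omega
    exact_mod_cast this
  have key : (Mi.card : ℚ) * d + d ≤ Mo.card * d := by
    calc (Mi.card : ℚ) * d + d = ((Mi.card : ℚ) + 1) * d := by ring
    _ ≤ Mo.card * d := by
        apply mul_le_mul_of_nonneg_right hcard (by linarith)
  rw [hout]
  nlinarith
end
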